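/- arXiv:math/0304362 — 3 statements merged into one kernel-verified Lean document; each statement's English description precedes it below -/
import Mathlib

section
/- Let R be a Boolean ring and a = Σ_{i≥0} a_i x^i ∈ R[x]. Then a lies in the set {b - b^2 : b ∈ R[x]} if and only if a_0 = 0 and, for every i ≥ 0, the (finite) sum Σ_{j≥0} a_{(2i+1)·2^j} equals 0 in R. -/
/-!
In a Boolean ring squaring is additive and fixes scalars, so `b ^ 2 = expand R 2 b`, and the
theorem is the case `p = 2` of a statement about `b - expand R p b` over any commutative ring.
The coefficient of `b - expand R p b` at `n` is `b n - b (n / p)`, the second term present only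
when `p ∣ n`, so along each chain `m, m p, m p², …` with `p ∤ m` these coefficients telescope to
zero. Conversely, for large `N` the polynomial `b := -∑_{k=1}^{N} contract (p ^ k) a` has
`b n = -∑_{k ≥ 1} a (n p ^ k)`: for `p ∤ n` this is `a n` because the chain sum through `n`
vanishes, and for `p ∣ n` the difference `b n - b (n / p)` telescopes to `a n`.
-/

open Polynomial Finset

namespace Polynomial

variable {R : Type*} [CommRing R] {p : ℕ}

theorem coeff_mul_pow_eq_zero_of_natDegree_lt (a : R[X]) (hp : 1 < p) {m N j : ℕ} (hm : m ≠ 0)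
    (hN : a.natDegree < N) (hj : N ≤ j) : a.coeff (m * p ^ j) = 0 :=
  coeff_eq_zero_of_natDegree_lt <| calc
    a.natDegree < j := by omega
    _ < p ^ j := Nat.lt_pow_self hp
    _ ≤ m * p ^ j := Nat.le_mul_of_pos_left _ (Nat.pos_of_ne_zero hm)

theorem finsum_coeff_mul_pow_eq_sum_range (a : R[X]) (hp : 1 < p) {m N : ℕ} (hm : m ≠ 0)
    (hN : a.natDegree < N) :
    ∑ᶠ j, a.coeff (m * p ^ j) = ∑ j ∈ range N, a.coeff (m * p ^ j) := by
  refine finsum_eq_sum_of_support_subset _ fun j hj => ?_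
  by_contra hjN
  exact hj (a.coeff_mul_pow_eq_zero_of_natDegree_lt hp hm hN (by simpa using hjN))

theorem coeff_sub_expand (hp : 0 < p) (b : R[X]) (n : ℕ) :
    (b - expand R p b).coeff n = b.coeff n - if p ∣ n then b.coeff (n / p) else 0 := by
  rw [coeff_sub, coeff_expand hp]

theorem finsum_coeff_sub_expand_mul_pow (hp : 1 < p) (b : R[X]) {m : ℕ} (hm : ¬p ∣ m) :
    ∑ᶠ j, (b - expand R p b).coeff (m * p ^ j) = 0 := by
  have hm0 : m ≠ 0 := by rintro rfl; exact hm (dvd_zero p)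
  set N := max (b - expand R p b).natDegree b.natDegree + 1
  rw [finsum_coeff_mul_pow_eq_sum_range _ hp hm0 (by omega : _ < N + 1), sum_range_succ']
  have hstep : ∀ j, (b - expand R p b).coeff (m * p ^ (j + 1)) =
      b.coeff (m * p ^ (j + 1)) - b.coeff (m * p ^ j) := fun j => by
    rw [coeff_sub_expand (by omega), if_pos ⟨m * p ^ j, by ring⟩,
      pow_succ, ← mul_assoc, Nat.mul_div_cancel _ (by omega)]
  simp only [hstep, coeff_sub_expand (by omega : 0 < p), if_neg hm, pow_zero, mul_one, sub_zero]
  rw [sum_range_sub (fun j => b.coeff (m * p ^ j)),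
    b.coeff_mul_pow_eq_zero_of_natDegree_lt hp hm0 (by omega : _ < N) le_rfl]
  simp

theorem exists_eq_sub_expand_of_finsum_eq_zero (hp : 1 < p) (a : R[X]) (h0 : a.coeff 0 = 0)
    (hsum : ∀ m, ¬p ∣ m → ∑ᶠ j, a.coeff (m * p ^ j) = 0) :
    ∃ b : R[X], a = b - expand R p b := by
  set N := a.natDegree + 1
  refine ⟨-∑ k ∈ range N, contract (p ^ (k + 1)) a, ?_⟩
  have hb : ∀ n, (-∑ k ∈ range N, contract (p ^ (k + 1)) a).coeff n =
      -∑ k ∈ range N, a.coeff (n * p ^ (k + 1)) := fun n => by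
    simp only [coeff_neg, finsetSum_coeff, coeff_contract (pow_ne_zero _ (by omega : p ≠ 0))]
  ext n
  rw [coeff_sub_expand (by omega), hb]
  split_ifs with hpn
  · obtain ⟨n, rfl⟩ := hpn
    have htail : a.coeff (n * p ^ (N + 1)) = 0 := by
      rcases Nat.eq_zero_or_pos n with rfl | hn
      · simpa using h0
      · exact a.coeff_mul_pow_eq_zero_of_natDegree_lt hp hn.ne' (N := N) (by omega) (by omega)
    have hshift : ∀ k, p * n * p ^ (k + 1) = n * p ^ (k + 1 + 1) := fun k => by ring
    rw [hb, Nat.mul_div_cancel_left _ (by omega), neg_sub_neg]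
    simp_rw [hshift]
    rw [← sum_sub_distrib, sum_range_sub' (fun k => a.coeff (n * p ^ (k + 1))), htail]
    simp [mul_comm]
  · have hchain := hsum n hpn
    rw [finsum_coeff_mul_pow_eq_sum_range _ hp (by rintro rfl; exact hpn (dvd_zero p))
      (by omega : _ < N + 1), sum_range_succ', pow_zero, mul_one] at hchain
    linear_combination hchain

theorem exists_eq_sub_expand_iff (hp : 1 < p) (a : R[X]) :
    (∃ b : R[X], a = b - expand R p b) ↔
      a.coeff 0 = 0 ∧ ∀ m, ¬p ∣ m → ∑ᶠ j, a.coeff (m * p ^ j) = 0 := by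
  refine ⟨?_, fun h => exists_eq_sub_expand_of_finsum_eq_zero hp a h.1 h.2⟩
  rintro ⟨b, rfl⟩
  refine ⟨?_, fun m hm => finsum_coeff_sub_expand_mul_pow hp b hm⟩
  simp [coeff_sub_expand (by omega : 0 < p)]

end Polynomial

theorem sq_eq_expand_two {R : Type*} [CommRing R] (hB : ∀ r : R, r ^ 2 = r) (b : R[X]) :
    b ^ 2 = expand R 2 b := by
  have h2 : (2 : R[X]) = 0 := by
    rw [← C_ofNat, C_eq_zero]
    linear_combination hB 2 - 4 * hB 1
  induction b using Polynomial.induction_on' with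
  | add p q hp hq => rw [map_add]; linear_combination hp + hq + p * q * h2
  | monomial k c => rw [monomial_pow, hB, expand_monomial, mul_comm]

/-- Let `R` be a Boolean ring and `a = Σ_{i≥0} a_i x^i ∈ R[x]`. Then `a` lies in the
set `{b - b^2 : b ∈ R[x]}` if and only if `a_0 = 0` and, for every `i ≥ 0`, the
(finite) sum `Σ_{j≥0} a_{(2i+1)·2^j}` equals `0` in `R`. -/
theorem stmt_3 (R : Type*) [CommRing R] (hB : ∀ r : R, r ^ 2 = r) (a : R[X]) :
    (∃ b : R[X], a = b - b ^ 2) ↔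
      (a.coeff 0 = 0 ∧ ∀ i : ℕ, ∑ᶠ j : ℕ, a.coeff ((2 * i + 1) * 2 ^ j) = 0) := by
  simp_rw [sq_eq_expand_two hB, exists_eq_sub_expand_iff one_lt_two]
  refine and_congr_right fun _ => ⟨fun h i => h _ (by omega), fun h m hm => ?_⟩
  obtain ⟨i, rfl⟩ : ∃ i, m = 2 * i + 1 := ⟨m / 2, by omega⟩
  exact h i
end

section
/- Let R be a Boolean ring and a, b ∈ R[x] with a - a^2 = b^2·x. Then b = 0 and a is a constant polynomial (equal to its constant coefficient). -/
open Polynomial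

/-- Let `R` be a Boolean ring and `a, b ∈ R[x]` with `a - a^2 = b^2·x`.
Then `b = 0` and `a` is a constant polynomial (equal to its constant coefficient). -/
theorem stmt_5 (R : Type*) [CommRing R] (hB : ∀ r : R, r ^ 2 = r)
    (a b : R[X]) (h : a - a ^ 2 = b ^ 2 * X) :
    b = 0 ∧ a = C (a.coeff 0) := by
  have hred : IsReduced R := by
    constructor
    rintro x ⟨n, hn⟩
    have hx : ∀ m : ℕ, x ^ (m + 1) = x := by
      intro m
      induction m with
      | zero => simp
      | succ k ih => rw [pow_succ, ih, ← pow_two, hB]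
    rcases n with _ | n
    · simpa using congrArg (· * x) hn
    · rw [hx n] at hn; exact hn
  -- first, a has natDegree 0
  have hd : a.natDegree = 0 := by
    by_contra hd
    have hd1 : 1 ≤ a.natDegree := Nat.one_le_iff_ne_zero.mpr hd
    have ha0 : a ≠ 0 := fun h0 => hd (by simp [h0])
    have hc : a.leadingCoeff ≠ 0 := leadingCoeff_ne_zero.mpr ha0
    have hcoeff : (a - a ^ 2).coeff (2 * a.natDegree) = -a.leadingCoeff := by
      rw [coeff_sub, coeff_pow_mul_natDegree, hB,
        coeff_eq_zero_of_natDegree_lt (by omega)]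
      ring
    have hne : (a - a ^ 2).coeff (2 * a.natDegree) ≠ 0 := by
      rw [hcoeff]; simpa using hc
    have hle : 2 * a.natDegree ≤ (a - a ^ 2).natDegree := le_natDegree_of_ne_zero hne
    have hub : (a - a ^ 2).natDegree ≤ 2 * a.natDegree := by
      refine le_trans (natDegree_sub_le _ _) ?_
      simp only [max_le_iff]
      refine ⟨by omega, le_trans (natDegree_pow_le) (by omega)⟩
    have hdeg : (a - a ^ 2).natDegree = 2 * a.natDegree := le_antisymm hub hle
    have hb0 : b ≠ 0 := by
      rintro rfl
      rw [zero_pow (by norm_num), zero_mul] at h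
      exact hne (by rw [h, coeff_zero])
    haveI : Nontrivial R := ⟨⟨a.leadingCoeff, 0, hc⟩⟩
    have hcb : b.leadingCoeff ≠ 0 := leadingCoeff_ne_zero.mpr hb0
    have hb2lc : b.leadingCoeff ^ 2 ≠ 0 := by rw [hB]; exact hcb
    have hdb2 : (b ^ 2).natDegree = 2 * b.natDegree := natDegree_pow' hb2lc
    have hrhs : (b ^ 2 * X).natDegree = 2 * b.natDegree + 1 := by
      have hlc : (b ^ 2).leadingCoeff * X.leadingCoeff ≠ 0 := by
        rw [leadingCoeff_pow' (by rw [hB]; exact hcb), leadingCoeff_X, mul_one, hB]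
        exact hcb
      rw [natDegree_mul' hlc, hdb2, natDegree_X]
    rw [h, hrhs] at hdeg
    omega
  have ha : a = C (a.coeff 0) := (Polynomial.eq_C_of_natDegree_eq_zero hd)
  have hlhs : a - a ^ 2 = 0 := by
    rw [ha, ← C_pow, hB, sub_self]
  rw [hlhs] at h
  have hb2 : b ^ 2 = 0 := by
    ext n
    have := congrArg (fun p => Polynomial.coeff p (n + 1)) h
    simpa [coeff_mul_X] using this.symm
  have hbnil : IsNilpotent b := ⟨2, hb2⟩
  have hb : b = 0 := by
    ext n
    have := (Polynomial.isNilpotent_iff.mp hbnil) n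
    simpa using this.eq_zero
  exact ⟨hb, ha⟩
end

section
/- Let A be a ring with involution, ε = ±1, and let (K, ψ) be an ε-quadratic form with K a finitely generated projective A-module and ψ: K → K* an A-module morphism such that λ = ψ + ε·ψ* : K → K* is an isomorphism. If L ⊂ K is a lagrangian for the ε-symmetric form (K, λ) (i.e. L is a direct summand with λ(x)(y) = 0 for all x, y ∈ L and L^⊥ = L), then there exists a direct summand L'' ⊂ K with K = L ⊕ L'' such that L'' is also a lagrangian for (K, λ). -/
/-!
Split `K = L ⊕ L'` with `L'` an arbitrary complement. Since `λ` is onto `K*`, for each `y ∈ L'`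
some `c` has `λ(c, ·) = -ψ(y, ·)` on `L'` and `λ(c, ·) = 0` on `L`, so `c ∈ L^⊥ = L`.
The graph `L'' = {c + y}` of `y ↦ c` is again a complement of `L`, and it is isotropic because
`ψ` enters its definition in place of `λ`: `λ(c + y, c' + y')` collapses to
`(λ(c, y') + ψ(y, y')) + ε·(λ(c', y) + ψ(y', y))*`. An isotropic complement of a lagrangian is
itself lagrangian.
-/

/-- A pairing `ψ : K → K*`, where `K* = Hom_A(K, A)` is a left module via `(a f)(y) = f(y) a*`. -/
structure SesqForm (A K : Type*) [Ring A] [StarRing A] [AddCommGroup K] [Module A K] where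
  toFun : K → K → A
  add_left : ∀ x x' y : K, toFun (x + x') y = toFun x y + toFun x' y
  add_right : ∀ x y y' : K, toFun x (y + y') = toFun x y + toFun x y'
  smul_left : ∀ (a : A) (x y : K), toFun (a • x) y = toFun x y * star a
  smul_right : ∀ (a : A) (x y : K), toFun x (a • y) = a * toFun x y

namespace SesqForm

variable {A K : Type*} [Ring A] [StarRing A] [AddCommGroup K] [Module A K]

instance : CoeFun (SesqForm A K) (fun _ => K → K → A) := ⟨SesqForm.toFun⟩

variable (ψ : SesqForm A K) (ε : A)

lemma zero_left (y : K) : ψ 0 y = 0 := by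
  simpa using ψ.add_left 0 0 y

lemma zero_right (x : K) : ψ x 0 = 0 := by
  simpa using ψ.add_right x 0 0

def toDual (x : K) : K →ₗ[A] A where
  toFun := ψ x
  map_add' := ψ.add_right x
  map_smul' a := ψ.smul_right a x

/-- The `ε`-symmetrization `λ = ψ + ε ψ*`. -/
def symmetrize (x y : K) : A := ψ x y + ε * star (ψ y x)

def IsIsotropic (L : Submodule A K) : Prop := ∀ x ∈ L, ∀ y ∈ L, ψ.symmetrize ε x y = 0

def IsLagrangian (L : Submodule A K) : Prop :=
  ψ.IsIsotropic ε L ∧ ∀ x : K, (∀ y ∈ L, ψ.symmetrize ε x y = 0) → x ∈ L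

variable {ψ ε}

lemma symmetrize_add_left (x x' y : K) :
    ψ.symmetrize ε (x + x') y = ψ.symmetrize ε x y + ψ.symmetrize ε x' y := by
  simp only [symmetrize, ψ.add_left, ψ.add_right, star_add, mul_add]
  abel

lemma symmetrize_add_right (x y y' : K) :
    ψ.symmetrize ε x (y + y') = ψ.symmetrize ε x y + ψ.symmetrize ε x y' := by
  simp only [symmetrize, ψ.add_left, ψ.add_right, star_add, mul_add]
  abel

lemma symmetrize_smul_left (a : A) (x y : K) :
    ψ.symmetrize ε (a • x) y = ψ.symmetrize ε x y * star a := by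
  simp only [symmetrize, ψ.smul_left, ψ.smul_right, star_mul, add_mul, mul_assoc]

lemma symmetrize_swap (hε : ∀ a : A, Commute ε a) (hε' : ε * star ε = 1) (x y : K) :
    ψ.symmetrize ε y x = ε * star (ψ.symmetrize ε x y) := by
  simp only [symmetrize, star_add, star_mul, star_star, mul_add]
  rw [← mul_assoc ε (ψ y x), (hε (ψ y x)).eq, mul_assoc, hε', mul_one, add_comm]

lemma eq_zero_of_symmetrize_eq_zero (hinj : ∀ x : K, (∀ y : K, ψ.symmetrize ε x y = 0) → x = 0)
    {L M : Submodule A K} (hLM : Codisjoint L M) {x : K}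
    (hL : ∀ y ∈ L, ψ.symmetrize ε x y = 0) (hM : ∀ y ∈ M, ψ.symmetrize ε x y = 0) : x = 0 := by
  refine hinj x fun k => ?_
  obtain ⟨l, hl, m, hm, rfl⟩ := Submodule.mem_sup.mp (hLM.eq_top ▸ Submodule.mem_top : k ∈ L ⊔ M)
  rw [symmetrize_add_right, hL l hl, hM m hm, add_zero]

lemma mem_of_forall_symmetrize_eq_zero
    (hinj : ∀ x : K, (∀ y : K, ψ.symmetrize ε x y = 0) → x = 0)
    {L M : Submodule A K} (hLM : Codisjoint L M) (hL : ψ.IsIsotropic ε L)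
    (hM : ψ.IsIsotropic ε M) {x : K} (hx : ∀ y ∈ M, ψ.symmetrize ε x y = 0) : x ∈ M := by
  obtain ⟨l, hl, m, hm, rfl⟩ := Submodule.mem_sup.mp (hLM.eq_top ▸ Submodule.mem_top : x ∈ L ⊔ M)
  have hl0 : l = 0 := by
    refine eq_zero_of_symmetrize_eq_zero hinj hLM (hL l hl) fun y hy => ?_
    have := hx y hy
    rwa [symmetrize_add_left, hM m hm y hy, add_zero] at this
  rwa [hl0, zero_add]

section Complement

variable {L L' : Submodule A K}

variable (ψ ε) in
def graphComplement (hc : IsCompl L L') : Submodule A K where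
  carrier := {x | ∀ y ∈ L',
    ψ.symmetrize ε (L.projection L' hc x) y + ψ (L'.projection L hc.symm x) y = 0}
  add_mem' {x x'} hx hx' y hy := by
    rw [map_add, map_add, symmetrize_add_left, ψ.add_left, add_add_add_comm, hx y hy, hx' y hy,
      add_zero]
  zero_mem' y _ := by simp [symmetrize, zero_left, zero_right]
  smul_mem' a x hx y hy := by
    rw [map_smul, map_smul, symmetrize_smul_left, ψ.smul_left, ← add_mul, hx y hy, zero_mul]

lemma isCompl_graphComplement (hinj : ∀ x : K, (∀ y : K, ψ.symmetrize ε x y = 0) → x = 0)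
    (hsurj : ∀ g : K →ₗ[A] A, ∃ x : K, ∀ y : K, g y = ψ.symmetrize ε x y)
    (hL : ψ.IsLagrangian ε L) (hc : IsCompl L L') :
    IsCompl L (graphComplement ψ ε hc) := by
  constructor
  · refine Submodule.disjoint_def.mpr fun x hxL hx => ?_
    refine eq_zero_of_symmetrize_eq_zero hinj hc.codisjoint (hL.1 x hxL) fun y hy => ?_
    simpa [Submodule.projection_apply_of_mem_left hc hxL,
      Submodule.projection_apply_of_mem_right hc.symm hxL, zero_left] using hx y hy
  · refine codisjoint_iff.mpr (eq_top_iff.mpr fun k _ => ?_)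
    obtain ⟨l, hl, y, hy, rfl⟩ :=
      Submodule.mem_sup.mp (hc.codisjoint.eq_top ▸ Submodule.mem_top : k ∈ L ⊔ L')
    obtain ⟨c, hc'⟩ := hsurj (-(ψ.toDual y ∘ₗ L'.projection L hc.symm))
    have hcL : c ∈ L := hL.2 c fun u hu => by
      simp [← hc', Submodule.projection_apply_of_mem_right hc.symm hu, toDual, zero_right]
    have hcy : c + y ∈ graphComplement ψ ε hc := fun y' hy' => by
      rw [map_add, map_add, Submodule.projection_apply_of_mem_left hc hcL,
        Submodule.projection_apply_of_mem_right hc hy,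
        Submodule.projection_apply_of_mem_right hc.symm hcL,
        Submodule.projection_apply_of_mem_left hc.symm hy, add_zero, zero_add, ← hc' y']
      simp [Submodule.projection_apply_of_mem_left hc.symm hy', toDual]
    rw [show l + y = (l - c) + (c + y) by abel]
    exact Submodule.add_mem_sup (L.sub_mem hl hcL) hcy

lemma isIsotropic_graphComplement (hε : ∀ a : A, Commute ε a) (hε' : ε * star ε = 1)
    (hL : ψ.IsIsotropic ε L) (hc : IsCompl L L') : ψ.IsIsotropic ε (graphComplement ψ ε hc) := by
  intro x hx z hz
  set a := L.projection L' hc x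
  set b := L'.projection L hc.symm x
  set c := L.projection L' hc z
  set d := L'.projection L hc.symm z
  have had : ψ.symmetrize ε a d + ψ b d = 0 := hx d (Submodule.projection_apply_mem _ z)
  have hcb : ψ.symmetrize ε c b + ψ d b = 0 := hz b (Submodule.projection_apply_mem _ x)
  have hac : ψ.symmetrize ε a c = 0 :=
    hL a (Submodule.projection_apply_mem _ x) c (Submodule.projection_apply_mem _ z)
  calc ψ.symmetrize ε x z = ψ.symmetrize ε (a + b) (c + d) := by
        rw [Submodule.projection_add_projection_eq_self, Submodule.projection_add_projection_eq_self]
    _ = ψ.symmetrize ε a c + (ψ.symmetrize ε a d + ψ b d) +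
          ε * star (ψ.symmetrize ε c b + ψ d b) := by
        rw [symmetrize_add_left, symmetrize_add_right, symmetrize_add_right,
          symmetrize_swap hε hε' c b, star_add, mul_add]
        simp only [symmetrize]
        abel
    _ = 0 := by rw [hac, had, hcb, star_zero, mul_zero, add_zero, add_zero]

theorem exists_isCompl_isLagrangian (hε : ∀ a : A, Commute ε a) (hε' : ε * star ε = 1)
    (hinj : ∀ x : K, (∀ y : K, ψ.symmetrize ε x y = 0) → x = 0)
    (hsurj : ∀ g : K →ₗ[A] A, ∃ x : K, ∀ y : K, g y = ψ.symmetrize ε x y)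
    (hL : ψ.IsLagrangian ε L) (hc : IsCompl L L') :
    ∃ L'' : Submodule A K, IsCompl L L'' ∧ ψ.IsLagrangian ε L'' := by
  have hcompl := isCompl_graphComplement hinj hsurj hL hc
  have hiso := isIsotropic_graphComplement hε hε' hL.1 hc
  exact ⟨_, hcompl, hiso, fun x hx =>
    mem_of_forall_symmetrize_eq_zero hinj hcompl.codisjoint hL.1 hiso hx⟩

end Complement

end SesqForm

theorem stmt_15_general (A : Type*) [Ring A] [StarRing A] (ε : A) (hε : ε = 1 ∨ ε = -1)
    (K : Type*) [AddCommGroup K] [Module A K]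
    (ψ : K → K → A)
    (hadd₁ : ∀ x x' y : K, ψ (x + x') y = ψ x y + ψ x' y)
    (hadd₂ : ∀ x y y' : K, ψ x (y + y') = ψ x y + ψ x y')
    (hsmul₁ : ∀ (a : A) (x y : K), ψ (a • x) y = ψ x y * star a)
    (hsmul₂ : ∀ (a : A) (x y : K), ψ x (a • y) = a * ψ x y)
    -- `λ = ψ + ε·ψ* : K → K*` is injective:
    (hinj : ∀ x : K, (∀ y : K, ψ x y + ε * star (ψ y x) = 0) → x = 0)
    -- `λ = ψ + ε·ψ* : K → K*` is surjective:
    (hsurj : ∀ g : K →ₗ[A] A, ∃ x : K, ∀ y : K, g y = ψ x y + ε * star (ψ y x))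
    (L : Submodule A K)
    (hLsummand : ∃ L' : Submodule A K, IsCompl L L')
    (hLzero : ∀ x ∈ L, ∀ y ∈ L, ψ x y + ε * star (ψ y x) = 0)
    (hLperp : ∀ x : K, (∀ y ∈ L, ψ x y + ε * star (ψ y x) = 0) → x ∈ L) :
    ∃ L'' : Submodule A K, IsCompl L L'' ∧
      (∀ x ∈ L'', ∀ y ∈ L'', ψ x y + ε * star (ψ y x) = 0) ∧
      (∀ x : K, (∀ y ∈ L'', ψ x y + ε * star (ψ y x) = 0) → x ∈ L'') := by
  let Ψ : SesqForm A K := ⟨ψ, hadd₁, hadd₂, hsmul₁, hsmul₂⟩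
  have hεcomm : ∀ a : A, Commute ε a := by
    rcases hε with rfl | rfl <;> simp
  have hεunit : ε * star ε = 1 := by rcases hε with rfl | rfl <;> simp
  obtain ⟨L', hc⟩ := hLsummand
  exact Ψ.exists_isCompl_isLagrangian hεcomm hεunit hinj hsurj ⟨hLzero, hLperp⟩ hc

/-- Let `A` be a ring with involution, `ε = ±1`, and `(K, ψ)` an `ε`-quadratic form
with `K` a finitely generated projective `A`-module and `ψ` a sesquilinear pairing
such that `λ(x)(y) = ψ x y + ε·star (ψ y x)` defines an isomorphism `K → K*`.
If `L ⊂ K` is a lagrangian for the `ε`-symmetric form `(K, λ)` (a direct summand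
with `λ = 0` on `L × L` and `L^⊥ = L`), then there exists a direct complement
`L''` of `L` in `K` which is also a lagrangian for `(K, λ)`. -/
theorem stmt_15 (A : Type*) [Ring A] [StarRing A] (ε : A) (hε : ε = 1 ∨ ε = -1)
    (K : Type*) [AddCommGroup K] [Module A K]
    [Module.Finite A K] [Module.Projective A K]
    (ψ : K → K → A)
    (hadd₁ : ∀ x x' y : K, ψ (x + x') y = ψ x y + ψ x' y)
    (hadd₂ : ∀ x y y' : K, ψ x (y + y') = ψ x y + ψ x y')
    (hsmul₁ : ∀ (a : A) (x y : K), ψ (a • x) y = ψ x y * star a)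
    (hsmul₂ : ∀ (a : A) (x y : K), ψ x (a • y) = a * ψ x y)
    -- `λ = ψ + ε·ψ* : K → K*` is injective:
    (hinj : ∀ x : K, (∀ y : K, ψ x y + ε * star (ψ y x) = 0) → x = 0)
    -- `λ = ψ + ε·ψ* : K → K*` is surjective:
    (hsurj : ∀ g : K →ₗ[A] A, ∃ x : K, ∀ y : K, g y = ψ x y + ε * star (ψ y x))
    (L : Submodule A K)
    (hLsummand : ∃ L' : Submodule A K, IsCompl L L')
    (hLzero : ∀ x ∈ L, ∀ y ∈ L, ψ x y + ε * star (ψ y x) = 0)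
    (hLperp : ∀ x : K, (∀ y ∈ L, ψ x y + ε * star (ψ y x) = 0) → x ∈ L) :
    ∃ L'' : Submodule A K, IsCompl L L'' ∧
      (∀ x ∈ L'', ∀ y ∈ L'', ψ x y + ε * star (ψ y x) = 0) ∧
      (∀ x : K, (∀ y ∈ L'', ψ x y + ε * star (ψ y x) = 0) → x ∈ L'') :=
  stmt_15_general A ε hε K ψ hadd₁ hadd₂ hsmul₁ hsmul₂ hinj hsurj L hLsummand hLzero hLperp
end
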